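/- arXiv:2504.14273 — 3 statements merged into one kernel-verified Lean document; each statement's English description precedes it below -/
import Mathlib

section
/- Let N > m ≥ 1 and let a_1, …, a_N and k_1, …, k_m be positive integers satisfying the Calabi–Yau condition Σ_{i=1}^N a_i = Σ_{l=1}^m k_l. Fix z ∈ ℂ with z ≠ 0, and define F : ℂ → ℂ by F(w) = (−((N−m)/(N·w^N)) − ((N+m)/(N·z^N))) · (∏_{l=1}^m e_{k_l}(w,z)/(k_l·w)) / q(w,z). Then F is complex differentiable at z and deriv F z = 0. (This is the key step proving that the residue at w = z of the type (iii) graph integrand vanishes for Calabi–Yau complete intersections, since that integrand has the form g·F(w)/(w−z)² with g independent of w.) -/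
/-- `e_k(x,y) = ∏_{i=0}^{k} (i·x + (k−i)·y)`. -/
noncomputable def ek (k : ℕ) (x y : ℂ) : ℂ :=
  ∏ i ∈ Finset.range (k + 1), ((i : ℂ) * x + ((k - i : ℕ) : ℂ) * y)

/-- `q(x,y) = ∏_{i=1}^{N} ∏_{j=1}^{a_i−1} (j·x + (a_i−j)·y)`, with empty inner
products (when `a_i = 1`) equal to `1`. -/
noncomputable def qpoly {N : ℕ} (a : Fin N → ℕ) (x y : ℂ) : ℂ :=
  ∏ i, ∏ j ∈ Finset.Icc 1 (a i - 1), ((j : ℂ) * x + ((a i - j : ℕ) : ℂ) * y)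

/-- Gauss sum in `ℂ`. -/
lemma gaussC (n : ℕ) : (∑ j ∈ Finset.range n, (j:ℂ)) * 2 = (n:ℂ) * ((n:ℂ) - 1) := by
  induction n with
  | zero => simp
  | succ n ih =>
    rw [Finset.sum_range_succ, add_mul, ih]
    push_cast; ring

lemma sumIccC (n : ℕ) : (∑ j ∈ Finset.Icc 1 n, (j:ℂ)) * 2 = (n:ℂ) * ((n:ℂ) + 1) := by
  have h : Finset.Icc 1 n = (Finset.range (n+1)).erase 0 := by
    ext j; simp [Nat.lt_succ_iff, Nat.one_le_iff_ne_zero, and_comm]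
  rw [h, Finset.sum_erase _ (by simp)]
  have := gaussC (n+1)
  push_cast at this ⊢
  linear_combination this

lemma linprod_val (S : Finset ℕ) (c : ℕ) (z : ℂ) (hc : ∀ j ∈ S, j ≤ c) :
    ∏ j ∈ S, ((j:ℂ) * z + ((c - j : ℕ) : ℂ) * z) = ((c:ℂ) * z) ^ S.card := by
  rw [← Finset.prod_const]
  exact Finset.prod_congr rfl fun j hj => by
    rw [Nat.cast_sub (hc j hj)]; ring

lemma hasDerivAt_linprod (S : Finset ℕ) (c : ℕ) (z : ℂ) (hc : ∀ j ∈ S, j ≤ c) :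
    HasDerivAt (fun w => ∏ j ∈ S, ((j:ℂ) * w + ((c - j : ℕ) : ℂ) * z))
      (∑ j ∈ S, ((c:ℂ) * z) ^ (S.card - 1) * (j:ℂ)) z := by
  have h := HasDerivAt.fun_finsetProd (u := S)
    (f := fun j w => (j:ℂ) * w + ((c - j : ℕ) : ℂ) * z) (f' := fun j => (j:ℂ)) (x := z)
    (fun j hj => by simpa using ((hasDerivAt_id z).const_mul ((j:ℂ))).add_const (((c - j : ℕ) : ℂ) * z))
  refine h.congr_deriv (Eq.symm ?_)
  refine (Finset.sum_congr rfl fun j hj => ?_).symm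
  rw [smul_eq_mul]
  congr 1
  rw [linprod_val _ c z (fun j' hj' => hc j' (Finset.mem_of_mem_erase hj')),
    Finset.card_erase_of_mem hj]

lemma ek_val (k : ℕ) (z : ℂ) : ek k z z = ((k:ℂ) * z) ^ (k + 1) := by
  rw [ek, linprod_val _ k z (fun j hj => by simpa [Nat.lt_succ_iff] using hj),
    Finset.card_range]

lemma hasDerivAt_ek (k : ℕ) (z : ℂ) :
    HasDerivAt (fun w => ek k w z) (((k:ℂ) * z) ^ k * ((k:ℂ) * ((k:ℂ) + 1) / 2)) z := by
  have h := hasDerivAt_linprod (Finset.range (k+1)) k z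
    (fun j hj => by simpa [Nat.lt_succ_iff] using hj)
  simp only [Finset.card_range, Nat.add_sub_cancel, ← Finset.mul_sum] at h
  show HasDerivAt (fun w => ∏ j ∈ Finset.range (k + 1), ((j:ℂ) * w + ((k - j : ℕ) : ℂ) * z)) _ z
  convert h using 2
  have := gaussC (k+1)
  push_cast at this
  linear_combination -this / 2

lemma hasDerivAt_ekdiv (k : ℕ) (hk : 0 < k) (z : ℂ) (hz : z ≠ 0) :
    HasDerivAt (fun w => ek k w z / ((k:ℂ) * w))
      (((k:ℂ) * z) ^ k * (((k:ℂ) - 1) / (2 * z))) z := by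
  have hkz : (k:ℂ) * z ≠ 0 :=
    mul_ne_zero (Nat.cast_ne_zero.mpr hk.ne') hz
  have hden : HasDerivAt (fun w : ℂ => (k:ℂ) * w) (k:ℂ) z := by
    simpa using (hasDerivAt_id z).const_mul ((k:ℂ))
  have h := (hasDerivAt_ek k z).fun_div hden hkz
  refine h.congr_deriv (Eq.symm ?_)
  rw [ek_val]
  rw [eq_div_iff (pow_ne_zero 2 hkz)]
  field_simp
  ring

lemma qin_val (c : ℕ) (z : ℂ) :
    ∏ j ∈ Finset.Icc 1 (c-1), ((j:ℂ) * z + ((c - j : ℕ) : ℂ) * z) = ((c:ℂ) * z) ^ (c - 1) := by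
  rw [linprod_val _ c z (fun j hj => le_trans (Finset.mem_Icc.mp hj).2 (Nat.sub_le c 1)),
    Nat.card_Icc, Nat.add_sub_cancel]

lemma hasDerivAt_qin (c : ℕ) (hc : 0 < c) (z : ℂ) (hz : z ≠ 0) :
    HasDerivAt (fun w => ∏ j ∈ Finset.Icc 1 (c-1), ((j:ℂ) * w + ((c - j : ℕ) : ℂ) * z))
      (((c:ℂ) * z) ^ (c - 1) * (((c:ℂ) - 1) / (2 * z))) z := by
  have h := hasDerivAt_linprod (Finset.Icc 1 (c-1)) c z
    (fun j hj => le_trans (Finset.mem_Icc.mp hj).2 (Nat.sub_le c 1))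
  rw [Nat.card_Icc, show c - 1 + 1 - 1 - 1 = c - 2 from by omega, ← Finset.mul_sum] at h
  convert h using 1
  rcases Nat.lt_or_ge c 2 with h2 | h2
  · have hc1 : c = 1 := by omega
    subst hc1; simp
  · have hsum := sumIccC (c-1)
    have hc1 : ((c - 1 : ℕ) : ℂ) = (c:ℂ) - 1 := by
      rw [Nat.cast_sub hc]; norm_num
    rw [hc1] at hsum
    have hpow : ((c:ℂ)*z) ^ (c-1) = ((c:ℂ)*z) ^ (c-2) * ((c:ℂ)*z) := by
      rw [← pow_succ]; congr 1; omega
    have hS : (∑ i ∈ Finset.Icc 1 (c-1), (i:ℂ)) = ((c:ℂ)-1)*(c:ℂ)/2 := by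
      linear_combination hsum/2
    rw [hpow, hS]
    field_simp

/-- For a Calabi–Yau complete intersection (`Σ a_i = Σ k_l`), the function
`F(w) = (−(N−m)/(N·w^N) − (N+m)/(N·z^N)) · (∏_l e_{k_l}(w,z)/(k_l·w)) / q(w,z)`
is complex differentiable at `z ≠ 0` with `deriv F z = 0`; this is the key step
showing the residue at `w = z` of the type (iii) graph integrand vanishes. -/
theorem deriv_typeIII_factor_eq_zero_of_calabiYau
    (N m : ℕ) (hm : 1 ≤ m) (hNm : m < N)
    (a : Fin N → ℕ) (ha : ∀ i, 0 < a i)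
    (k : Fin m → ℕ) (hk : ∀ l, 0 < k l)
    (hCY : ∑ i, a i = ∑ l, k l)
    (z : ℂ) (hz : z ≠ 0)
    (F : ℂ → ℂ)
    (hF : ∀ w : ℂ, F w =
      (-(((N : ℂ) - (m : ℂ)) / ((N : ℂ) * w ^ N))
        - (((N : ℂ) + (m : ℂ)) / ((N : ℂ) * z ^ N)))
      * (∏ l, ek (k l) w z / ((k l : ℂ) * w)) / qpoly a w z) :
    DifferentiableAt ℂ F z ∧ deriv F z = 0 := by
  have hNC : (N:ℂ) ≠ 0 := Nat.cast_ne_zero.mpr (by omega)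
  have hkz : ∀ l, ((k l : ℂ) * z) ≠ 0 :=
    fun l => mul_ne_zero (Nat.cast_ne_zero.mpr (hk l).ne') hz
  have haz : ∀ i, ((a i : ℂ) * z) ≠ 0 :=
    fun i => mul_ne_zero (Nat.cast_ne_zero.mpr (ha i).ne') hz
  set Pv : ℂ := ∏ l, ((k l : ℂ) * z) ^ (k l) with hPvdef
  set Qv : ℂ := ∏ i, ((a i : ℂ) * z) ^ (a i - 1) with hQvdef
  set K : ℂ := ∑ l, (k l : ℂ) with hKdef
  have hQv_ne : Qv ≠ 0 :=
    Finset.prod_ne_zero_iff.mpr fun i _ => pow_ne_zero _ (haz i)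
  -- value of the P-product at z
  have hv : ∀ j : Fin m, ek (k j) z z / ((k j:ℂ)*z) = ((k j:ℂ)*z)^(k j) := by
    intro j
    rw [ek_val, pow_succ, mul_div_assoc, div_self (hkz j), mul_one]
  have hPz : (∏ l, ek (k l) z z / ((k l : ℂ) * z)) = Pv :=
    Finset.prod_congr rfl fun l _ => hv l
  -- value of qpoly at z
  have hQz : qpoly a z z = Qv := by
    rw [qpoly]
    exact Finset.prod_congr rfl fun i _ => qin_val (a i) z
  -- derivative of the P-product
  have hP : HasDerivAt (fun w => ∏ l, ek (k l) w z / ((k l : ℂ) * w))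
      (Pv * ((K - (m:ℂ)) / (2 * z))) z := by
    have h := HasDerivAt.fun_finsetProd (u := (Finset.univ : Finset (Fin m)))
      (f := fun l w => ek (k l) w z / ((k l : ℂ) * w))
      (f' := fun l => ((k l:ℂ)*z)^(k l) * (((k l:ℂ) - 1)/(2*z)))
      (x := z) (fun l _ => hasDerivAt_ekdiv (k l) (hk l) z hz)
    refine h.congr_deriv (Eq.symm ?_)
    have step : ∀ l : Fin m,
        (∏ j ∈ Finset.univ.erase l, ek (k j) z z / ((k j : ℂ) * z)) •
          (((k l:ℂ)*z)^(k l) * (((k l:ℂ) - 1)/(2*z)))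
        = Pv * (((k l:ℂ) - 1)/(2*z)) := by
      intro l
      rw [smul_eq_mul]
      have h1 : (∏ j ∈ Finset.univ.erase l, ek (k j) z z / ((k j : ℂ) * z))
          = ∏ j ∈ Finset.univ.erase l, ((k j:ℂ)*z)^(k j) :=
        Finset.prod_congr rfl fun j _ => hv j
      have h2 : (∏ j ∈ Finset.univ.erase l, ((k j:ℂ)*z)^(k j)) * ((k l:ℂ)*z)^(k l) = Pv :=
        Finset.prod_erase_mul _ _ (Finset.mem_univ l)
      rw [h1, ← h2]; ring
    rw [Finset.sum_congr rfl fun l _ => step l, ← Finset.mul_sum, ← Finset.sum_div]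
    have h3 : (∑ l, ((k l:ℂ) - 1)) = K - (m:ℂ) := by
      rw [Finset.sum_sub_distrib, Finset.sum_const, Finset.card_univ, Fintype.card_fin,
        nsmul_eq_mul, mul_one, hKdef]
    rw [h3]
  -- derivative of qpoly
  have hQ : HasDerivAt (fun w => qpoly a w z)
      (Qv * (((∑ i, (a i : ℂ)) - (N:ℂ)) / (2 * z))) z := by
    have h := HasDerivAt.fun_finsetProd (u := (Finset.univ : Finset (Fin N)))
      (f := fun i w => ∏ j ∈ Finset.Icc 1 (a i - 1), ((j:ℂ) * w + ((a i - j : ℕ) : ℂ) * z))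
      (f' := fun i => ((a i:ℂ)*z)^(a i - 1) * (((a i:ℂ) - 1)/(2*z)))
      (x := z) (fun i _ => hasDerivAt_qin (a i) (ha i) z hz)
    simp only [qpoly]
    refine h.congr_deriv (Eq.symm ?_)
    have step : ∀ i : Fin N,
        (∏ i' ∈ Finset.univ.erase i,
            ∏ j ∈ Finset.Icc 1 (a i' - 1), ((j:ℂ) * z + ((a i' - j : ℕ) : ℂ) * z)) •
          (((a i:ℂ)*z)^(a i - 1) * (((a i:ℂ) - 1)/(2*z)))
        = Qv * (((a i:ℂ) - 1)/(2*z)) := by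
      intro i
      rw [smul_eq_mul]
      have h1 : (∏ i' ∈ Finset.univ.erase i,
            ∏ j ∈ Finset.Icc 1 (a i' - 1), ((j:ℂ) * z + ((a i' - j : ℕ) : ℂ) * z))
          = ∏ i' ∈ Finset.univ.erase i, ((a i':ℂ)*z)^(a i' - 1) :=
        Finset.prod_congr rfl fun i' _ => qin_val (a i') z
      have h2 : (∏ i' ∈ Finset.univ.erase i, ((a i':ℂ)*z)^(a i' - 1)) * ((a i:ℂ)*z)^(a i - 1)
          = Qv := Finset.prod_erase_mul _ _ (Finset.mem_univ i)
      rw [h1, ← h2]; ring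
    rw [Finset.sum_congr rfl fun i _ => step i, ← Finset.mul_sum, ← Finset.sum_div]
    have h3 : (∑ i, ((a i:ℂ) - 1)) = (∑ i, (a i:ℂ)) - (N:ℂ) := by
      rw [Finset.sum_sub_distrib, Finset.sum_const, Finset.card_univ, Fintype.card_fin,
        nsmul_eq_mul, mul_one]
    rw [h3]
  -- derivative of the prefactor A
  have hN1 : 1 ≤ N := by omega
  have hNzN : (N:ℂ) * z ^ N ≠ 0 := mul_ne_zero hNC (pow_ne_zero _ hz)
  have hA : HasDerivAt (fun w => -(((N : ℂ) - (m : ℂ)) / ((N : ℂ) * w ^ N))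
        - (((N : ℂ) + (m : ℂ)) / ((N : ℂ) * z ^ N)))
      (((N:ℂ) - (m:ℂ)) / (z ^ N * z)) z := by
    have hpow : HasDerivAt (fun w : ℂ => (N:ℂ) * w ^ N) ((N:ℂ) * ((N:ℂ) * z^(N-1))) z :=
      (hasDerivAt_pow N z).const_mul ((N:ℂ))
    have hinv := hpow.fun_inv hNzN
    have hA0 := ((hinv.const_mul ((N:ℂ) - (m:ℂ))).fun_neg).sub_const
      (((N : ℂ) + (m : ℂ)) / ((N : ℂ) * z ^ N))
    simp only [← div_eq_mul_inv] at hA0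
    refine hA0.congr_deriv (Eq.symm ?_)
    have hz1 : z^(N-1) * z = z^N := by
      rw [← pow_succ]; congr 1; omega
    rw [div_eq_iff (mul_ne_zero (pow_ne_zero _ hz) hz)]
    field_simp
    linear_combination ((m:ℂ) - (N:ℂ)) * hz1
  -- assemble
  have hQz_ne : qpoly a z z ≠ 0 := by rw [hQz]; exact hQv_ne
  have hFd := (hA.fun_mul hP).fun_div hQ hQz_ne
  have hFfun : F = fun w =>
      (-(((N : ℂ) - (m : ℂ)) / ((N : ℂ) * w ^ N))
        - (((N : ℂ) + (m : ℂ)) / ((N : ℂ) * z ^ N)))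
      * (∏ l, ek (k l) w z / ((k l : ℂ) * w)) / qpoly a w z := funext hF
  rw [hFfun]
  refine ⟨hFd.differentiableAt, ?_⟩
  rw [hFd.deriv]
  rw [hPz, hQz]
  have hCYC : (∑ i, (a i : ℂ)) = K := by
    rw [hKdef]
    exact_mod_cast congrArg (Nat.cast : ℕ → ℂ) hCY
  rw [hCYC]
  rw [div_eq_zero_iff]
  left
  field_simp
  ring
end

section
/- Let a_1, …, a_N be positive integers and let z ∈ ℂ with z ≠ 0. Then the derivative of q in its first argument evaluated on the diagonal satisfies deriv (fun w ↦ q(w,z)) z = (Σ_{i=1}^{N} (a_i − 1)/(2·z)) · ∏_{i=1}^{N} (a_i·z)^{a_i−1}. Equivalently, deriv (fun w ↦ q(w,z)) z = Σ_{i=1}^{N} (a_i·(a_i−1)/2) · (a_i·z)^{a_i−2} · ∏_{l≠i} (a_l·z)^{a_l−1}, where a summand with a_i = 1 is zero. -/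
private lemma gauss_complex (m : ℕ) : ∑ j ∈ Finset.Icc 1 m, (j : ℂ) = m * (m + 1) / 2 := by
  induction m with
  | zero => simp
  | succ n ih =>
    rw [Finset.sum_Icc_succ_top (by omega)]
    push_cast
    rw [ih]; ring

private lemma prod_factor_const (S : Finset ℕ) (n : ℕ) (hS : ∀ k ∈ S, k ≤ n) (z : ℂ) :
    ∏ k ∈ S, ((k : ℂ) * z + ((n - k : ℕ) : ℂ) * z) = ((n : ℂ) * z) ^ S.card := by
  rw [← Finset.prod_const]
  apply Finset.prod_congr rfl
  intro k hk
  rw [Nat.cast_sub (hS k hk)]; ring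

/-- The derivative of `q` in its first argument on the diagonal:
`deriv (fun w ↦ q(w,z)) z = (Σ_i (a_i−1)/(2z)) · ∏_i (a_i·z)^(a_i−1)`,
and equivalently
`deriv (fun w ↦ q(w,z)) z = Σ_i (a_i(a_i−1)/2) · (a_i·z)^(a_i−2) · ∏_{l≠i} (a_l·z)^(a_l−1)`. -/
theorem deriv_qpoly_diag {N : ℕ} (a : Fin N → ℕ) (ha : ∀ i, 0 < a i)
    (z : ℂ) (hz : z ≠ 0) :
    deriv (fun w : ℂ => qpoly a w z) z
      = (∑ i, ((a i : ℂ) - 1) / (2 * z)) * ∏ i, ((a i : ℂ) * z) ^ (a i - 1)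
    ∧ deriv (fun w : ℂ => qpoly a w z) z
      = ∑ i, ((a i : ℂ) * ((a i : ℂ) - 1) / 2) * ((a i : ℂ) * z) ^ (a i - 2)
          * ∏ l ∈ Finset.univ.erase i, ((a l : ℂ) * z) ^ (a l - 1) := by
  set f : Fin N → ℂ → ℂ := fun i w =>
    ∏ j ∈ Finset.Icc 1 (a i - 1), ((j : ℂ) * w + ((a i - j : ℕ) : ℂ) * z) with hf
  have hval : ∀ i, f i z = ((a i : ℂ) * z) ^ (a i - 1) := by
    intro i
    have := prod_factor_const (Finset.Icc 1 (a i - 1)) (a i)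
      (fun k hk => by simp only [Finset.mem_Icc] at hk; omega) z
    simpa [hf, Nat.card_Icc] using this
  have hD : ∀ i, HasDerivAt (fun w => f i w)
      (((a i : ℂ) * ((a i : ℂ) - 1) / 2) * ((a i : ℂ) * z) ^ (a i - 2)) z := by
    intro i
    have h : HasDerivAt (fun w => f i w)
        (∑ j ∈ Finset.Icc 1 (a i - 1),
          (∏ k ∈ (Finset.Icc 1 (a i - 1)).erase j,
            ((k : ℂ) * z + ((a i - k : ℕ) : ℂ) * z)) • (j : ℂ)) z := by
      apply HasDerivAt.fun_finsetProd
      intro j hj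
      simpa using ((hasDerivAt_id z).const_mul (j : ℂ)).add_const (((a i - j : ℕ) : ℂ) * z)
    convert h using 1
    rw [Finset.sum_congr rfl (fun j hj => ?_)]
    · rw [← Finset.sum_mul, gauss_complex]
      rw [Nat.cast_sub (ha i)]
      push_cast
      have h1 : (1:ℕ) ≤ a i := ha i
      have : ((a i : ℂ) - 1) * ((a i : ℂ) - 1 + 1) = (a i : ℂ) * ((a i : ℂ) - 1) := by ring
      rw [this]
    · have hmem := hj
      simp only [Finset.mem_Icc] at hmem
      rw [prod_factor_const _ (a i)
        (fun k hk => by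
          have := Finset.mem_of_mem_erase hk
          simp only [Finset.mem_Icc] at this; omega) z,
        Finset.card_erase_of_mem hj, Nat.card_Icc]
      have : a i - 1 + 1 - 1 - 1 = a i - 2 := by omega
      rw [this, smul_eq_mul]
      ring
  have hmain : HasDerivAt (fun w : ℂ => qpoly a w z)
      (∑ i, (∏ l ∈ Finset.univ.erase i, f l z) •
        (((a i : ℂ) * ((a i : ℂ) - 1) / 2) * ((a i : ℂ) * z) ^ (a i - 2))) z :=
    HasDerivAt.fun_finsetProd (fun i _ => hD i)
  have hderiv := hmain.deriv
  have key2 : deriv (fun w : ℂ => qpoly a w z) z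
      = ∑ i, ((a i : ℂ) * ((a i : ℂ) - 1) / 2) * ((a i : ℂ) * z) ^ (a i - 2)
          * ∏ l ∈ Finset.univ.erase i, ((a l : ℂ) * z) ^ (a l - 1) := by
    rw [hderiv]
    apply Finset.sum_congr rfl
    intro i _
    rw [Finset.prod_congr rfl (fun l _ => hval l), smul_eq_mul]
    ring
  refine ⟨?_, key2⟩
  rw [key2, Finset.sum_mul]
  apply Finset.sum_congr rfl
  intro i _
  rw [← Finset.mul_prod_erase Finset.univ _ (Finset.mem_univ i)]
  rcases Nat.lt_or_ge (a i) 2 with h2 | h2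
  · have h1 : a i = 1 := by have := ha i; omega
    simp [h1]
  · have : a i - 1 = (a i - 2) + 1 := by omega
    rw [this, pow_succ]
    field_simp
end

section
/- For every positive integer k and every z ∈ ℂ with z ≠ 0, the derivative of the normalized factor e_k(w,z)/(k·w) in w evaluated at w = z satisfies deriv (fun w ↦ e_k(w,z)/(k·w)) z = ((k−1)/(2·z)) · (k·z)^k. -/
/-- `deriv (fun w ↦ e_k(w,z)/(k·w)) z = ((k−1)/(2z)) · (k·z)^k` for `z ≠ 0`. -/
theorem deriv_ek_div_diag (k : ℕ) (hk : 0 < k) (z : ℂ) (hz : z ≠ 0) :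
    deriv (fun w : ℂ => ek k w z / ((k : ℂ) * w)) z
      = (((k : ℂ) - 1) / (2 * z)) * ((k : ℂ) * z) ^ k := by
  have hk' : (k : ℂ) ≠ 0 := Nat.cast_ne_zero.mpr hk.ne'
  have hkz : (k : ℂ) * z ≠ 0 := mul_ne_zero hk' hz
  have hfac : ∀ i ∈ Finset.range (k + 1),
      (i : ℂ) * z + ((k - i : ℕ) : ℂ) * z = (k : ℂ) * z := by
    intro i hi
    have : (i : ℂ) + ((k - i : ℕ) : ℂ) = (k : ℂ) := by
      rw [← Nat.cast_add, Nat.add_sub_cancel' (Nat.lt_succ_iff.mp (Finset.mem_range.mp hi))]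
    rw [← add_mul, this]
  have hprod : HasDerivAt (fun w : ℂ => ek k w z)
      (∑ i ∈ Finset.range (k + 1),
        (∏ j ∈ (Finset.range (k + 1)).erase i, ((j : ℂ) * z + ((k - j : ℕ) : ℂ) * z)) • (i : ℂ)) z := by
    apply HasDerivAt.fun_finsetProd
    intro i _
    simpa using ((hasDerivAt_id z).const_mul (i : ℂ)).add_const (((k - i : ℕ) : ℂ) * z)
  have hsum : (∑ i ∈ Finset.range (k + 1),
        (∏ j ∈ (Finset.range (k + 1)).erase i, ((j : ℂ) * z + ((k - j : ℕ) : ℂ) * z)) • (i : ℂ))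
      = ((k : ℂ) * (k + 1) / 2) * ((k : ℂ) * z) ^ k := by
    have : ∀ i ∈ Finset.range (k + 1),
        (∏ j ∈ (Finset.range (k + 1)).erase i, ((j : ℂ) * z + ((k - j : ℕ) : ℂ) * z)) • (i : ℂ)
        = ((k : ℂ) * z) ^ k * (i : ℂ) := by
      intro i hi
      rw [Finset.prod_congr rfl (fun j hj => hfac j (Finset.mem_of_mem_erase hj)),
        Finset.prod_const, Finset.card_erase_of_mem hi, Finset.card_range]
      simp [smul_eq_mul]
    rw [Finset.sum_congr rfl this, ← Finset.mul_sum, ← Nat.cast_sum, Finset.sum_range_id,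
      mul_comm]
    congr 1
    have hdvd : 2 ∣ (k + 1) * k := by
      rw [mul_comm]; exact (Nat.even_mul_succ_self k).two_dvd
    simp only [Nat.add_sub_cancel]
    rw [Nat.cast_div hdvd (by norm_num)]
    push_cast
    ring
  have hek : ek k z z = ((k : ℂ) * z) ^ (k + 1) := by
    rw [ek, Finset.prod_congr rfl hfac, Finset.prod_const, Finset.card_range]
  have hden : HasDerivAt (fun w : ℂ => (k : ℂ) * w) (k : ℂ) z := by
    simpa using (hasDerivAt_id z).const_mul (k : ℂ)
  have hdiv := (hsum ▸ hprod).fun_div hden hkz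
  rw [hdiv.deriv, hek]
  field_simp
  ring
end
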